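/- For any prime p ≥ 5 and any positive integers r and s, the double sum ∑_{n=0}^{rp-1} ∑_{m=0}^{sp-1} binomial(n+m, m)^2 is congruent to ε_{rs} modulo p if p ≡ 1 (mod 3), and congruent to -ε_{rs} modulo p if p ≡ 2 (mod 3), where ε_{rs} = ∑_{n=0}^{r-1} ∑_{m=0}^{s-1} binomial(n+m, m)^2. -/

import Mathlib

/-!
By Lucas' theorem, for base-`p` digits `n₀, m₀ < p` the binomial
`C(ap + n₀ + bp + m₀, bp + m₀)` is `C(a + b, b) * C(n₀ + m₀, m₀)` mod `p` (both sides vanish when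
`n₀ + m₀` carries), so the double sum factors as `ε_{rs}` times the sum over the `p × p` square.
In the square only the triangle `n + m < p` survives, and summing along antidiagonals gives
`∑_{k<p} C(2k, k)`. As `p / 2 ≡ -1/2`, `C(2k, k) ≡ (-4)^k C(p / 2, k)` for `k ≤ p / 2`, while
`C(2k, k) ≡ 0` for `p / 2 < k < p`; hence the sum is `(1 - 4)^(p / 2) ≡ (-3 / p)`, which by quadratic
reciprocity is `1` or `-1` according as `p ≡ 1` or `2 (mod 3)`.
-/

open Finset

theorem Nat.add_mod_lt_right {n m p : ℕ} (hn : n < p) (hm : m < p) (h : p ≤ n + m) :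
    (n + m) % p < m := by
  rw [Nat.mod_eq_sub_mod h, Nat.mod_eq_of_lt (by omega)]
  omega

theorem sum_range_mul_eq_sum_sum {M : Type*} [AddCommMonoid M] (f : ℕ → M) (r q : ℕ) :
    ∑ n ∈ range (r * q), f n = ∑ a ∈ range r, ∑ b ∈ range q, f (a * q + b) := by
  induction r with
  | zero => simp
  | succ r ih => rw [Nat.succ_mul, sum_range_add, ih, sum_range_succ]

theorem sum_sum_range_mul_eq_mul {R : Type*} [CommSemiring R] (f : ℕ → ℕ → R) (q r s : ℕ)
    (hf : ∀ a b n m, n < q → m < q → f (a * q + n) (b * q + m) = f a b * f n m) :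
    ∑ n ∈ range (r * q), ∑ m ∈ range (s * q), f n m =
      (∑ a ∈ range r, ∑ b ∈ range s, f a b) * ∑ n ∈ range q, ∑ m ∈ range q, f n m := by
  simp only [sum_range_mul_eq_sum_sum, sum_mul]
  simp only [mul_sum]
  refine sum_congr rfl fun a _ => ?_
  rw [sum_comm]
  refine sum_congr rfl fun b _ => sum_congr rfl fun n hn => sum_congr rfl fun m hm => ?_
  exact hf a b n m (mem_range.mp hn) (mem_range.mp hm)

namespace ZMod

variable {p : ℕ} [Fact p.Prime]

theorem natCast_choose_eq_choose_mod_mul_choose_div (n k : ℕ) :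
    (n.choose k : ZMod p) = (n % p).choose (k % p) * (n / p).choose (k / p) := by
  exact_mod_cast
    (natCast_eq_natCast_iff _ _ _).mpr Choose.choose_modEq_choose_mod_mul_choose_div_nat

theorem natCast_choose_eq_zero_of_mod_lt_mod {n k : ℕ} (h : n % p < k % p) :
    (n.choose k : ZMod p) = 0 := by
  rw [natCast_choose_eq_choose_mod_mul_choose_div, Nat.choose_eq_zero_of_lt h, Nat.cast_zero,
    zero_mul]

theorem natCast_add_choose_eq_zero {n m : ℕ} (hn : n < p) (hm : m < p) (h : p ≤ n + m) :
    ((n + m).choose m : ZMod p) = 0 :=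
  natCast_choose_eq_zero_of_mod_lt_mod <| by
    rw [Nat.mod_eq_of_lt hm]
    exact Nat.add_mod_lt_right hn hm h

theorem natCast_add_choose_mul_add {n m : ℕ} (a b : ℕ) (hn : n < p) (hm : m < p) :
    ((a * p + n + (b * p + m)).choose (b * p + m) : ZMod p) =
      (a + b).choose b * (n + m).choose m := by
  have hp := (Fact.out : p.Prime).pos
  rw [show a * p + n + (b * p + m) = n + m + (a + b) * p by ring, add_comm (b * p),
    natCast_choose_eq_choose_mod_mul_choose_div, Nat.add_mul_mod_self_right,
    Nat.add_mul_mod_self_right, Nat.add_mul_div_right _ _ hp, Nat.add_mul_div_right _ _ hp,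
    Nat.mod_eq_of_lt hm, Nat.div_eq_of_lt hm, zero_add]
  by_cases hnm : n + m < p
  · rw [Nat.mod_eq_of_lt hnm, Nat.div_eq_of_lt hnm, zero_add, mul_comm]
  · have hlt := Nat.add_mod_lt_right hn hm (not_lt.mp hnm)
    rw [Nat.choose_eq_zero_of_lt hlt, natCast_add_choose_eq_zero hn hm (not_lt.mp hnm),
      Nat.cast_zero, zero_mul, mul_zero]

theorem sum_range_sum_range_add_choose_sq :
    ∑ n ∈ range p, ∑ m ∈ range p, ((n + m).choose m : ZMod p) ^ 2 =
      ∑ k ∈ range p, (k.centralBinom : ZMod p) := by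
  have htriangle : ∀ n ∈ range p, ∑ m ∈ range p, ((n + m).choose m : ZMod p) ^ 2 =
      ∑ m ∈ range (p - n), ((n + m).choose m : ZMod p) ^ 2 := fun n hn =>
    (sum_subset (range_mono (Nat.sub_le p n)) fun m hm hm' => by
      simp only [mem_range] at hn hm hm'
      rw [natCast_add_choose_eq_zero hn hm (by omega), zero_pow two_ne_zero]).symm
  have hrow : ∀ k, ∑ j ∈ range (k + 1), ((j + (k - j)).choose (k - j) : ZMod p) ^ 2 =
      k.centralBinom := fun k => by
    rw [Nat.centralBinom_eq_two_mul_choose, ← Nat.sum_range_choose_sq]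
    push_cast
    refine sum_congr rfl fun j hj => ?_
    have hjk : j ≤ k := Nat.lt_succ_iff.mp (mem_range.mp hj)
    rw [Nat.add_sub_cancel' hjk, Nat.choose_symm hjk]
  rw [sum_congr rfl htriangle, ← sum_range_diag_flip p fun n m => ((n + m).choose m : ZMod p) ^ 2]
  exact sum_congr rfl fun k _ => hrow k

theorem natCast_centralBinom_eq_neg_four_pow_mul_choose (hp : Odd p) {k : ℕ} (hk : k ≤ p / 2) :
    (k.centralBinom : ZMod p) = (-4) ^ k * (p / 2).choose k := by
  have hhalf : 2 * ((p / 2 : ℕ) : ZMod p) + 1 = 0 := by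
    have h : ((2 * (p / 2) + 1 : ℕ) : ZMod p) = 0 := by
      rw [Nat.two_mul_div_two_add_one_of_odd hp, natCast_self]
    exact_mod_cast h
  induction k with
  | zero => simp
  | succ k ih =>
    have hk0 : ((k + 1 : ℕ) : ZMod p) ≠ 0 := by
      rw [Ne, natCast_eq_zero_iff]
      exact Nat.not_dvd_of_pos_of_lt k.succ_pos (by omega)
    have hcb := congrArg (Nat.cast : ℕ → ZMod p) (Nat.succ_mul_centralBinom_succ k)
    have hch := congrArg (Nat.cast : ℕ → ZMod p) (Nat.choose_succ_right_eq (p / 2) k)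
    push_cast [Nat.cast_sub (by omega : k ≤ p / 2)] at hcb hch hk0
    apply mul_left_cancel₀ hk0
    linear_combination hcb + 2 * (2 * (k : ZMod p) + 1) * ih (by omega) - (-4) ^ (k + 1) * hch
      + 2 * (-4) ^ k * ((p / 2).choose k : ZMod p) * hhalf

theorem natCast_centralBinom_eq_zero {k : ℕ} (hk : p / 2 < k) (hkp : k < p) :
    (k.centralBinom : ZMod p) = 0 := by
  rw [Nat.centralBinom_eq_two_mul_choose, two_mul]
  exact natCast_add_choose_eq_zero hkp hkp (by omega)

theorem sum_range_centralBinom (hp : Odd p) :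
    ∑ k ∈ range p, (k.centralBinom : ZMod p) = (-3) ^ (p / 2) := by
  have := hp.pos
  rw [← sum_range_add_sum_Ico _ (by omega : p / 2 + 1 ≤ p),
    sum_eq_zero fun k hk => natCast_centralBinom_eq_zero (mem_Ico.mp hk).1 (mem_Ico.mp hk).2,
    add_zero, sum_congr rfl fun k hk => natCast_centralBinom_eq_neg_four_pow_mul_choose hp
      (Nat.lt_succ_iff.mp (mem_range.mp hk))]
  rw [show (-3 : ZMod p) = -4 + 1 by norm_num, add_pow]
  simp only [one_pow, mul_one]

theorem intCast_pow_div_two (a : ℤ) : (a : ZMod p) ^ (p / 2) = jacobiSym a p := by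
  rw [← jacobiSym.legendreSym.to_jacobiSym, legendreSym.eq_pow]

end ZMod

theorem jacobiSym.at_neg_three_of_mod_three_eq_one {b : ℕ} (hb : Odd b) (h : b % 3 = 1) :
    jacobiSym (-3) b = 1 := by
  have hb2 := Nat.odd_iff.mp hb
  rw [jacobiSym.mod_right _ hb, show 4 * Int.natAbs (-3) = 12 from rfl]
  obtain h' | h' : b % 12 = 1 ∨ b % 12 = 7 := by omega
  all_goals rw [h']; norm_num

theorem jacobiSym.at_neg_three_of_mod_three_eq_two {b : ℕ} (hb : Odd b) (h : b % 3 = 2) :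
    jacobiSym (-3) b = -1 := by
  have hb2 := Nat.odd_iff.mp hb
  rw [jacobiSym.mod_right _ hb, show 4 * Int.natAbs (-3) = 12 from rfl]
  obtain h' | h' : b % 12 = 5 ∨ b % 12 = 11 := by omega
  all_goals rw [h']; norm_num

theorem double_sum_choose_sq_rp_sp_mod_p_general (p : ℕ) (hp : p.Prime) (hp5 : 5 ≤ p)
    (r s : ℕ) :
    (p % 3 = 1 → (∑ n ∈ Finset.range (r * p), ∑ m ∈ Finset.range (s * p),
      ((n + m).choose m : ZMod p) ^ 2) =
      ∑ n ∈ Finset.range r, ∑ m ∈ Finset.range s, ((n + m).choose m : ZMod p) ^ 2) ∧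
    (p % 3 = 2 → (∑ n ∈ Finset.range (r * p), ∑ m ∈ Finset.range (s * p),
      ((n + m).choose m : ZMod p) ^ 2) =
      -∑ n ∈ Finset.range r, ∑ m ∈ Finset.range s, ((n + m).choose m : ZMod p) ^ 2) := by
  have := Fact.mk hp
  have hodd : Odd p := hp.odd_of_ne_two (by omega)
  rw [sum_sum_range_mul_eq_mul (fun n m => ((n + m).choose m : ZMod p) ^ 2) p r s
      fun a b n m hn hm => by rw [ZMod.natCast_add_choose_mul_add a b hn hm, mul_pow],
    ZMod.sum_range_sum_range_add_choose_sq, ZMod.sum_range_centralBinom hodd,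
    show (-3 : ZMod p) = ((-3 : ℤ) : ZMod p) by norm_num, ZMod.intCast_pow_div_two]
  refine ⟨fun h => ?_, fun h => ?_⟩
  · rw [jacobiSym.at_neg_three_of_mod_three_eq_one hodd h, Int.cast_one, mul_one]
  · rw [jacobiSym.at_neg_three_of_mod_three_eq_two hodd h, Int.cast_neg, Int.cast_one, mul_neg_one]

theorem double_sum_choose_sq_rp_sp_mod_p (p : ℕ) (hp : p.Prime) (hp5 : 5 ≤ p)
    (r s : ℕ) (hr : 0 < r) (hs : 0 < s) :
    (p % 3 = 1 → (∑ n ∈ Finset.range (r * p), ∑ m ∈ Finset.range (s * p),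
      ((n + m).choose m : ZMod p) ^ 2) =
      ∑ n ∈ Finset.range r, ∑ m ∈ Finset.range s, ((n + m).choose m : ZMod p) ^ 2) ∧
    (p % 3 = 2 → (∑ n ∈ Finset.range (r * p), ∑ m ∈ Finset.range (s * p),
      ((n + m).choose m : ZMod p) ^ 2) =
      -∑ n ∈ Finset.range r, ∑ m ∈ Finset.range s, ((n + m).choose m : ZMod p) ^ 2) :=
  double_sum_choose_sq_rp_sp_mod_p_general p hp hp5 r s
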